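/- arXiv:1910.01633 — 2 statements merged into one kernel-verified Lean document; each statement's English description precedes it below -/
import Mathlib

section
/- Let Q be a connected quiver, k a field, θ : V → ℝ generic with Σ_{i∈V} θ_i = 0, and (x, x*) a toric representation of the double quiver of Q. Then (x, x*) is θ-stable if and only if there exists a spanning tree T of Q such that for every e ∈ T: if e is θ-forward then x_e ≠ 0, and if e is θ-backward then x*_e ≠ 0. -/
open Classical Finset

noncomputable section

/-- The equivalence relation on vertices generated by the edges in `D`:
`t e` and `h e` are related for every `e ∈ D`. -/
def joinedRel {V E : Type} (tl hd : E → V) (D : Set E) : V → V → Prop :=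
  Relation.EqvGen fun a b => ∃ e ∈ D, (tl e = a ∧ hd e = b) ∨ (tl e = b ∧ hd e = a)

/-- The graph `(V, D)` is connected. -/
def IsConn {V E : Type} (tl hd : E → V) (D : Set E) : Prop :=
  ∀ a b : V, joinedRel tl hd D a b

/-- `T ⊆ E` is a spanning tree: `(V, T)` is connected and `#T = #V - 1`. -/
def IsSpanningTree {V E : Type} [Fintype V] (tl hd : E → V) (T : Finset E) : Prop :=
  IsConn tl hd ↑T ∧ T.card + 1 = Fintype.card V

/-- The connected component of the vertex `v` in the graph with edge set `D`. -/
def component {V E : Type} [Fintype V] (tl hd : E → V) (D : Finset E) (v : V) : Finset V :=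
  Finset.univ.filter fun j => joinedRel tl hd (↑D) v j

/-- Genericity of a stability parameter. -/
def Generic {V : Type} [Fintype V] (θ : V → ℝ) : Prop :=
  ∀ J : Finset V, J.Nonempty → J ≠ Finset.univ → ∑ i ∈ J, θ i ≠ 0

/-- Auxiliary recursion computing the external activity: `S` is the set of remaining
edges and `C` the set of already contracted edges (an edge of the current, partially
contracted, quiver is a loop iff its endpoints are joined by edges of `C`).  At each
step the largest non-loop edge is contracted (if it lies in `T`) or deleted (otherwise);
once no non-loop edge remains (i.e. the contracted quiver has one vertex), the number of
remaining (loop) edges is returned. -/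
def extactAux {V E : Type} [LinearOrder E] (tl hd : E → V) (T : Finset E)
    (S C : Finset E) : ℕ :=
  if hne : (S.filter fun e => ¬ joinedRel tl hd (↑C) (tl e) (hd e)).Nonempty then
    if (S.filter fun e => ¬ joinedRel tl hd (↑C) (tl e) (hd e)).max' hne ∈ T then
      extactAux tl hd T
        (S.erase ((S.filter fun e => ¬ joinedRel tl hd (↑C) (tl e) (hd e)).max' hne))
        (insert ((S.filter fun e => ¬ joinedRel tl hd (↑C) (tl e) (hd e)).max' hne) C)
    else
      extactAux tl hd T
        (S.erase ((S.filter fun e => ¬ joinedRel tl hd (↑C) (tl e) (hd e)).max' hne)) C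
  else S.card
termination_by S.card
decreasing_by
  · exact Finset.card_lt_card (Finset.erase_ssubset
      (Finset.mem_of_mem_filter _ (Finset.max'_mem _ hne)))
  · exact Finset.card_lt_card (Finset.erase_ssubset
      (Finset.mem_of_mem_filter _ (Finset.max'_mem _ hne)))

/-- The external activity `extact(Q, T)` of a spanning tree `T`, with respect to a fixed
linear order on the edges. -/
def extact {V E : Type} [Fintype E] [LinearOrder E] (tl hd : E → V) (T : Finset E) : ℕ :=
  extactAux tl hd T Finset.univ ∅

/-- Isomorphism of toric representations. -/
def IsoRep {V E k : Type} [Field k] (tl hd : E → V) (x x' : E → k) : Prop :=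
  ∃ g : V → kˣ, ∀ e, x' e = (g (hd e) : k) * x e * ((g (tl e) : k))⁻¹

/-- Gauge equivalence (the `(kˣ)^V`-action) for representations of the double quiver. -/
def GaugeEquiv {V E k : Type} [Field k] (tl hd : E → V) (x xs x' xs' : E → k) : Prop :=
  ∃ g : V → kˣ,
    (∀ e, x' e = (g (hd e) : k) * x e * ((g (tl e) : k))⁻¹) ∧
    (∀ e, xs' e = (g (tl e) : k) * xs e * ((g (hd e) : k))⁻¹)

/-- The moment map equations for the parameter `lam`. -/
def MomentMap {V E k : Type} [Fintype E] [Field k] (tl hd : E → V) (lam : V → k)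
    (x xs : E → k) : Prop :=
  ∀ i : V,
    (∑ e ∈ Finset.univ.filter fun e => hd e = i, x e * xs e) -
      (∑ e ∈ Finset.univ.filter fun e => tl e = i, x e * xs e) = lam i

/-- `J` is closed for `(x, xs)`, with only the conditions for edges in `S` imposed. -/
def ClosedOn {V E k : Type} [Zero k] (tl hd : E → V) (x xs : E → k) (S : Set E)
    (J : Finset V) : Prop :=
  ∀ e ∈ S, (x e ≠ 0 → tl e ∈ J → hd e ∈ J) ∧ (xs e ≠ 0 → hd e ∈ J → tl e ∈ J)

/-- `θ`-stability of `(x, xs)` on the subquiver with vertex set `W` and edge set `S`. -/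
def StableSub {V E k : Type} [Zero k] (tl hd : E → V) (θ : V → ℝ) (x xs : E → k)
    (W : Finset V) (S : Set E) : Prop :=
  ∀ J : Finset V, J ⊆ W → ClosedOn tl hd x xs S J → J.Nonempty → J ≠ W →
    0 < ∑ i ∈ J, θ i

/-- Destabilising subsets for `(x, xs)` on the subquiver `(W, S)`. -/
def DestabSub {V E k : Type} [Zero k] (tl hd : E → V) (θ : V → ℝ) (x xs : E → k)
    (W : Finset V) (S : Set E) (J : Finset V) : Prop :=
  J ⊆ W ∧ J.Nonempty ∧ J ≠ W ∧ ClosedOn tl hd x xs S J ∧ ∑ i ∈ J, θ i ≤ 0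

/-- The projection identifying the vertex `a` with the vertex `b`, i.e. the quotient map
`V → V/e` for the contraction of an edge with tail `a` and head `b` (the quotient being
modelled on the subtype of vertices different from `a`). -/
def cProj {V : Type} (a b : V) (h : b ≠ a) (i : V) : {j : V // j ≠ a} :=
  if hi : i = a then ⟨b, h⟩ else ⟨i, hi⟩

/-- Tail map of the contracted quiver `Q/e`. -/
def contractTl {V E : Type} (tl hd : E → V) (e : E) (h : hd e ≠ tl e)
    (f : {f : E // f ≠ e}) : {j : V // j ≠ tl e} := cProj (tl e) (hd e) h (tl f.1)

/-- Head map of the contracted quiver `Q/e`. -/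
def contractHd {V E : Type} (tl hd : E → V) (e : E) (h : hd e ≠ tl e)
    (f : {f : E // f ≠ e}) : {j : V // j ≠ tl e} := cProj (tl e) (hd e) h (hd f.1)

/-- Contraction `θ/e` (or `λ/e`) of a parameter along the contraction of an edge with
tail `a` and head `b`: the new vertex `ι` (represented by `b`) gets the value
`θ a + θ b`, all other vertices keep their values. -/
def contractParam {V R : Type} [Add R] (a b : V) (θ : V → R) (j : {i : V // i ≠ a}) : R :=
  if (j : V) = b then θ a + θ b else θ (j : V)

/-- The graph of the tree-assignment recursion: `TreeAssign tl hd x xs W S θ T` means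
that the recursion, applied to the restriction of `(x, xs)` to the subquiver with vertex
set `W` and edge set `S` and with stability parameter `θ` (and the linear order induced
from `E`), produces the spanning tree `T`. -/
inductive TreeAssign {V E k : Type} [Fintype V] [LinearOrder E] [Zero k]
    (tl hd : E → V) (x xs : E → k) :
    Finset V → Finset E → (V → ℝ) → Finset E → Prop
  | base (W : Finset V) (S : Finset E) (θ : V → ℝ) (hW : W.card = 1) :
      TreeAssign tl hd x xs W S θ ∅
  | delete (W : Finset V) (S : Finset E) (θ : V → ℝ) (e : E)
      (he : e ∈ S) (hloop : tl e ≠ hd e)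
      (hsmall : ∀ f ∈ S, tl f ≠ hd f → e ≤ f)
      (hstab : StableSub tl hd θ x xs W ↑(S.erase e))
      (T : Finset E) (ih : TreeAssign tl hd x xs W (S.erase e) θ T) :
      TreeAssign tl hd x xs W S θ T
  | contract (W : Finset V) (S : Finset E) (θ : V → ℝ) (e : E) (a b : V)
      (he : e ∈ S) (hloop : tl e ≠ hd e)
      (hsmall : ∀ f ∈ S, tl f ≠ hd f → e ≤ f)
      (hab : (a = tl e ∧ b = hd e) ∨ (a = hd e ∧ b = tl e))
      (J₁ : Finset V)
      (hJ₁ : DestabSub tl hd θ x xs W ↑(S.erase e) J₁)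
      (hall : ∀ J, DestabSub tl hd θ x xs W ↑(S.erase e) J → a ∈ J ∧ b ∉ J)
      (hmin : ∀ J, DestabSub tl hd θ x xs W ↑(S.erase e) J →
        ∑ i ∈ J₁, θ i ≤ ∑ i ∈ J, θ i)
      (T₁ T₂ : Finset E)
      (ih₁ : TreeAssign tl hd x xs J₁ (S.filter fun f => tl f ∈ J₁ ∧ hd f ∈ J₁)
          (fun i => if i = a then θ i - ∑ j ∈ J₁, θ j
            else if i = b then θ i + ∑ j ∈ J₁, θ j else θ i) T₁)
      (ih₂ : TreeAssign tl hd x xs (W \ J₁)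
          (S.filter fun f => tl f ∈ W \ J₁ ∧ hd f ∈ W \ J₁)
          (fun i => if i = a then θ i - ∑ j ∈ J₁, θ j
            else if i = b then θ i + ∑ j ∈ J₁, θ j else θ i) T₂) :
      TreeAssign tl hd x xs W S θ (insert e (T₁ ∪ T₂))

/-- Points of the cell `M_T`: `θ`-stable pairs satisfying the moment map equations whose
assigned spanning tree is `T`. -/
def CellPt {V E k : Type} [Fintype V] [Fintype E] [LinearOrder E] [Field k]
    (tl hd : E → V) (lam : V → k) (θ : V → ℝ) (T : Finset E) : Type :=
  {p : (E → k) × (E → k) //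
    StableSub tl hd θ p.1 p.2 Finset.univ Set.univ ∧
    MomentMap tl hd lam p.1 p.2 ∧
    TreeAssign tl hd p.1 p.2 Finset.univ Finset.univ θ T}

/-- The cell `M_T` of the Nakajima orbit set: `(kˣ)^V`-orbits of points. -/
def Cell {V E k : Type} [Fintype V] [Fintype E] [LinearOrder E] [Field k]
    (tl hd : E → V) (lam : V → k) (θ : V → ℝ) (T : Finset E) : Type :=
  Quot fun p q : CellPt tl hd lam θ T => GaugeEquiv tl hd p.1.1 p.1.2 q.1.1 q.1.2

/-!
For a spanning tree `T` and any `J ⊆ V` one has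
`θ(J) = Σ_{e ∈ T} (1_J(h e) - 1_J(t e)) θ(T_{h(e)})`, because `1_J - Σ_e (…) 1_{T_{h(e)}}` is
constant along the edges of `T` and `Σ θ = 0`. If `J` is closed, the edge condition makes
every term nonnegative, and a tree edge leaving `J` makes one positive: this is stability.

Conversely, a stable representation is cut down by deletion–contraction. If deleting an edge
`e` keeps it stable, recurse. Otherwise take a set `J` destabilising `Q ∖ e` with least
`θ(J) < 0`; then `e` is an arrow leaving `J`, say from `a ∈ J` to `b ∉ J`. Both `J` and its
complement are stable for `θ` corrected at `a`, resp. `b`, to sum to zero (minimality of `θ(J)`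
is what makes this work), and the trees found on the two pieces are joined by `e`.
-/

section Connectivity

variable {V E : Type} {tl hd : E → V}

lemma joinedRel_of_mem {D : Set E} {e : E} (he : e ∈ D) : joinedRel tl hd D (tl e) (hd e) :=
  .rel _ _ ⟨e, he, .inl ⟨rfl, rfl⟩⟩

lemma joinedRel.le {D : Set E} (s : Setoid V) (hs : ∀ e ∈ D, s (tl e) (hd e)) {a b : V}
    (h : joinedRel tl hd D a b) : s a b :=
  Setoid.eqvGen_le (r := fun a b => ∃ e ∈ D, (tl e = a ∧ hd e = b) ∨ (tl e = b ∧ hd e = a))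
    (by rintro _ _ ⟨e, he, ⟨rfl, rfl⟩ | ⟨rfl, rfl⟩⟩; exacts [hs e he, s.symm (hs e he)]) h

lemma joinedRel.mono {D D' : Set E} (hD : D ⊆ D') {a b : V} (h : joinedRel tl hd D a b) :
    joinedRel tl hd D' a b :=
  h.le (Relation.EqvGen.setoid _) fun _ he => joinedRel_of_mem (hD he)

lemma joinedRel.eq_of_forall {β : Type*} {D : Set E} (f : V → β)
    (hf : ∀ e ∈ D, f (tl e) = f (hd e)) {a b : V} (h : joinedRel tl hd D a b) : f a = f b :=
  h.le (Setoid.ker f) hf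

lemma joinedRel.mem_iff {D : Set E} {R : Finset V} (hR : ∀ e ∈ D, tl e ∈ R ↔ hd e ∈ R)
    {a b : V} (h : joinedRel tl hd D a b) : a ∈ R ↔ b ∈ R :=
  Iff.of_eq (h.eq_of_forall (· ∈ R) fun e he => propext (hR e he))

lemma card_le_card_add_one_of_isConn [Fintype V] {D : Finset E} (hD : IsConn tl hd ↑D) :
    Fintype.card V ≤ D.card + 1 := by
  rcases isEmpty_or_nonempty V with hV | hV
  · simp
  let G := SimpleGraph.fromRel fun a b => ∃ e ∈ D, tl e = a ∧ hd e = b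
  have hG : G.Connected := by
    refine ⟨fun a b => (hD a b).le G.reachableSetoid fun e he => ?_⟩
    by_cases hloop : tl e = hd e
    · exact hloop ▸ SimpleGraph.Reachable.refl _
    · exact SimpleGraph.Adj.reachable
        ((SimpleGraph.fromRel_adj _ _ _).2 ⟨hloop, .inl ⟨e, he, rfl, rfl⟩⟩)
  have hedges : G.edgeSet ⊆ ↑(D.image fun e => s(tl e, hd e)) := by
    rintro ⟨a, b⟩ hab
    obtain ⟨-, ⟨e, he, rfl, rfl⟩ | ⟨e, he, rfl, rfl⟩⟩ :=
      (SimpleGraph.fromRel_adj _ _ _).1 ((SimpleGraph.mem_edgeSet _).1 hab)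
    · exact Finset.mem_image_of_mem _ he
    · exact Finset.mem_image.2 ⟨e, he, Sym2.eq_swap⟩
  calc Fintype.card V = Nat.card V := Nat.card_eq_fintype_card.symm
    _ ≤ Nat.card G.edgeSet + 1 := hG.card_vert_le_card_edgeSet_add_one
    _ ≤ D.card + 1 := by
      rw [Nat.card_coe_set_eq]
      gcongr
      exact (Set.ncard_le_ncard hedges (Finset.finite_toSet _)).trans
        ((Set.ncard_coe_finset _).trans_le Finset.card_image_le)

end Connectivity

section Components

variable {V E : Type} [Fintype V] {tl hd : E → V}

lemma mem_component {D : Finset E} {v j : V} :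
    j ∈ component tl hd D v ↔ joinedRel tl hd ↑D v j := by
  simp [component]

lemma mem_component_self (D : Finset E) (v : V) : v ∈ component tl hd D v :=
  mem_component.2 (.refl v)

lemma component_mono {D D' : Finset E} (hD : D ⊆ D') (v : V) :
    component tl hd D v ⊆ component tl hd D' v := fun _ hj =>
  mem_component.2 ((mem_component.1 hj).mono (Finset.coe_subset.2 hD))

lemma component_subset {D : Finset E} {R : Finset V} (hR : ∀ f ∈ D, tl f ∈ R ↔ hd f ∈ R)
    {v : V} (hv : v ∈ R) : component tl hd D v ⊆ R := fun _ hj =>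
  ((mem_component.1 hj).mem_iff hR).1 hv

lemma tl_mem_component_iff {D : Finset E} {f : E} (hf : f ∈ D) (v : V) :
    tl f ∈ component tl hd D v ↔ hd f ∈ component tl hd D v :=
  have hjoin := joinedRel_of_mem (tl := tl) (hd := hd) (Finset.mem_coe.2 hf)
  ⟨fun h => mem_component.2 ((mem_component.1 h).trans _ _ _ hjoin),
    fun h => mem_component.2 ((mem_component.1 h).trans _ _ _ hjoin.symm)⟩

lemma component_subset_of_mem {D : Finset E} {W : Finset V}
    (hD : ∀ f ∈ D, tl f ∈ W ∧ hd f ∈ W) {v : V} (hv : v ∈ W) : component tl hd D v ⊆ W :=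
  component_subset (fun f hf => iff_of_true (hD f hf).1 (hD f hf).2) hv

lemma IsSpanningTree.not_joinedRel_erase {T : Finset E} (hT : IsSpanningTree tl hd T)
    {e : E} (he : e ∈ T) : ¬ joinedRel tl hd ↑(T.erase e) (tl e) (hd e) := by
  intro hjoin
  have hconn : IsConn tl hd ↑(T.erase e) := fun a b =>
    (hT.1 a b).le (Relation.EqvGen.setoid _) fun f hf => by
      by_cases hfe : f = e
      · exact hfe ▸ hjoin
      · exact joinedRel_of_mem (Finset.mem_erase.2 ⟨hfe, hf⟩)
  have hle := card_le_card_add_one_of_isConn hconn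
  rw [Finset.card_erase_add_one he, ← hT.2] at hle
  omega

lemma IsSpanningTree.tl_notMem_component {T : Finset E} (hT : IsSpanningTree tl hd T)
    {e : E} (he : e ∈ T) : tl e ∉ component tl hd (T.erase e) (hd e) := fun h =>
  hT.not_joinedRel_erase he (mem_component.1 h).symm

end Components

/-- Every edge `e` of `T` carries an arrow pointing into the side of the cut of `T ∖ e` on
which `θ` is positive. -/
def IsAdapted {V E k : Type} [Fintype V] [Zero k] (tl hd : E → V) (θ : V → ℝ) (x xs : E → k)
    (T : Finset E) : Prop :=
  ∀ e ∈ T, ((0 < ∑ j ∈ component tl hd (T.erase e) (hd e), θ j) → x e ≠ 0) ∧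
    (¬ (0 < ∑ j ∈ component tl hd (T.erase e) (hd e), θ j) → xs e ≠ 0)

section CutIdentity

variable {V E : Type} [Fintype V] {tl hd : E → V} {T : Finset E}

/-- The edge `f` crosses the cut of `T ∖ e` only for `e = f`. -/
lemma sum_cut_indicator_sub (hT : IsSpanningTree tl hd T) (c : E → ℝ) {f : E} (hf : f ∈ T) :
    (∑ e ∈ T, c e * if hd f ∈ component tl hd (T.erase e) (hd e) then 1 else 0) -
      (∑ e ∈ T, c e * if tl f ∈ component tl hd (T.erase e) (hd e) then 1 else 0) = c f := by
  rw [← Finset.sum_sub_distrib, Finset.sum_eq_single_of_mem f hf]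
  · simp [mem_component_self, hT.tl_notMem_component hf]
  · intro e _ hef
    simp [tl_mem_component_iff (tl := tl) (hd := hd) (Finset.mem_erase.2 ⟨Ne.symm hef, hf⟩) (hd e)]

theorem sum_eq_sum_cut (hT : IsSpanningTree tl hd T) {θ : V → ℝ} (hθ : ∑ i, θ i = 0)
    (J : Finset V) :
    ∑ i ∈ J, θ i = ∑ e ∈ T, ((if hd e ∈ J then 1 else 0) - (if tl e ∈ J then 1 else 0)) *
      ∑ j ∈ component tl hd (T.erase e) (hd e), θ j := by
  set c : E → ℝ := fun e => (if hd e ∈ J then 1 else 0) - (if tl e ∈ J then 1 else 0)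
  set F : V → ℝ := fun v =>
    ∑ e ∈ T, c e * if v ∈ component tl hd (T.erase e) (hd e) then 1 else 0
  have : Nonempty V := Fintype.card_pos_iff.1 (by have := hT.2; omega)
  set v₀ : V := Classical.arbitrary V
  have hconst : ∀ v, (if v ∈ J then 1 else 0) - F v = (if v₀ ∈ J then 1 else 0) - F v₀ :=
    fun v => ((hT.1 v v₀).eq_of_forall (fun v => (if v ∈ J then 1 else 0) - F v) fun f hf => by
      have := sum_cut_indicator_sub hT c hf
      simp only [F, c] at this ⊢
      linarith)
  calc ∑ i ∈ J, θ i = ∑ v, θ v * if v ∈ J then 1 else 0 := by simp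
    _ = ∑ v, θ v * (F v + ((if v₀ ∈ J then 1 else 0) - F v₀)) :=
        Finset.sum_congr rfl fun v _ => by rw [← hconst v, add_sub_cancel]
    _ = ∑ v, θ v * F v := by
        simp only [mul_add, Finset.sum_add_distrib, ← Finset.sum_mul, hθ, zero_mul, add_zero]
    _ = _ := by
        simp only [F, Finset.mul_sum]
        rw [Finset.sum_comm]
        refine Finset.sum_congr rfl fun e _ => ?_
        simp [c, mul_comm]

variable {k : Type} [Zero k] {θ : V → ℝ} {x xs : E → k} {J : Finset V}

lemma cut_term_pos (hgen : Generic θ) (hT : IsSpanningTree tl hd T)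
    (hadapt : IsAdapted tl hd θ x xs T) (hJ : ClosedOn tl hd x xs Set.univ J) {e : E}
    (he : e ∈ T) (hcross : ¬ (tl e ∈ J ↔ hd e ∈ J)) :
    0 < ((if hd e ∈ J then 1 else 0) - (if tl e ∈ J then 1 else 0)) *
      ∑ j ∈ component tl hd (T.erase e) (hd e), θ j := by
  set s := ∑ j ∈ component tl hd (T.erase e) (hd e), θ j
  have hs : s ≠ 0 := hgen _ ⟨hd e, mem_component_self _ _⟩ fun h =>
    hT.tl_notMem_component he (h ▸ Finset.mem_univ _)
  obtain ⟨hx, hxs⟩ := hJ e (Set.mem_univ e)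
  by_cases htl : tl e ∈ J
  · have hhd : hd e ∉ J := fun h => hcross (iff_of_true htl h)
    have : ¬ 0 < s := fun h => hhd (hx ((hadapt e he).1 h) htl)
    simp only [htl, hhd, if_true, if_false]
    linarith [lt_of_le_of_ne (not_lt.1 this) hs]
  · have hhd : hd e ∈ J := by tauto
    have : 0 < s := by_contra fun h => htl (hxs ((hadapt e he).2 h) hhd)
    simpa [htl, hhd] using this

theorem stableSub_of_isAdapted (hgen : Generic θ) (hθ : ∑ i, θ i = 0)
    (hT : IsSpanningTree tl hd T) (hadapt : IsAdapted tl hd θ x xs T) :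
    StableSub tl hd θ x xs Finset.univ Set.univ := by
  intro J _ hJ hJne hJuniv
  obtain ⟨e, he, hcross⟩ : ∃ e ∈ T, ¬ (tl e ∈ J ↔ hd e ∈ J) := by
    by_contra! hnone
    obtain ⟨v, hv⟩ := hJne
    exact hJuniv (Finset.eq_univ_of_forall fun w => ((hT.1 v w).mem_iff hnone).1 hv)
  rw [sum_eq_sum_cut hT hθ J]
  refine Finset.sum_pos' (fun f hf => ?_) ⟨e, he, cut_term_pos hgen hT hadapt hJ he hcross⟩
  by_cases hfcross : tl f ∈ J ↔ hd f ∈ J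
  · simp [hfcross]
  · exact (cut_term_pos hgen hT hadapt hJ hf hfcross).le

end CutIdentity

def GenericOn {V : Type} (θ : V → ℝ) (W : Finset V) : Prop :=
  ∀ K ⊆ W, K.Nonempty → K ≠ W → ∑ i ∈ K, θ i ≠ 0

def recenter {V : Type} (θ : V → ℝ) (A : Finset V) (a : V) : V → ℝ :=
  Function.update θ a (θ a - ∑ i ∈ A, θ i)

section Recenter

variable {V : Type} {θ : V → ℝ} {A W : Finset V} {a : V}

lemma sum_recenter (K : Finset V) :
    ∑ i ∈ K, recenter θ A a i = ∑ i ∈ K, θ i - if a ∈ K then ∑ i ∈ A, θ i else 0 := by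
  by_cases ha : a ∈ K
  · rw [recenter, Finset.sum_update_of_mem ha, if_pos ha,
      ← Finset.add_sum_erase K θ ha, Finset.sdiff_singleton_eq_erase]
    ring
  · rw [recenter, Finset.sum_update_of_notMem ha, if_neg ha, sub_zero]

lemma sum_recenter_self (ha : a ∈ A) : ∑ i ∈ A, recenter θ A a i = 0 := by
  rw [sum_recenter, if_pos ha, sub_self]

lemma GenericOn.recenter (hgen : GenericOn θ W) (hAW : A ⊂ W) :
    GenericOn (recenter θ A a) A := by
  intro K hKA hKne hKA'
  rw [sum_recenter]
  split_ifs with haK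
  · have hrest : (A \ K).Nonempty := Finset.sdiff_nonempty.2 fun h => hKA' (hKA.antisymm h)
    have := hgen (A \ K) (Finset.sdiff_subset.trans hAW.subset) hrest
      (Finset.sdiff_subset.trans_ssubset hAW).ne
    rw [← Finset.sum_sdiff hKA]
    contrapose! this
    linarith
  · rw [sub_zero]
    exact hgen K (hKA.trans hAW.subset) hKne (hKA.trans_ssubset hAW).ne

end Recenter

structure IsSpanningTreeOn {V E : Type} (tl hd : E → V) (W : Finset V) (T : Finset E) :
    Prop where
  mem : ∀ f ∈ T, tl f ∈ W ∧ hd f ∈ W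
  joined : ∀ p ∈ W, ∀ q ∈ W, joinedRel tl hd ↑T p q
  card_add_one : T.card + 1 = W.card

section Glue

variable {V E : Type} {tl hd : E → V} {A B : Finset V} {a b : V} {e : E}

lemma IsSpanningTreeOn.of_card_eq_one {W : Finset V} (hW : W.card = 1) :
    IsSpanningTreeOn tl hd W ∅ := by
  obtain ⟨v, rfl⟩ := Finset.card_eq_one.1 hW
  refine ⟨by simp, fun p hp q hq => ?_, by simp⟩
  rw [Finset.mem_singleton] at hp hq
  exact hp ▸ hq ▸ .refl v

lemma IsSpanningTreeOn.isSpanningTree [Fintype V] {T : Finset E}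
    (hT : IsSpanningTreeOn tl hd Finset.univ T) : IsSpanningTree tl hd T :=
  ⟨fun p q => hT.joined p (Finset.mem_univ p) q (Finset.mem_univ q),
    Finset.card_univ (α := V) ▸ hT.card_add_one⟩

lemma notMem_union_of_crossing {T₁ T₂ : Finset E} (hAB : Disjoint A B)
    (h₁ : ∀ f ∈ T₁, tl f ∈ A ∧ hd f ∈ A) (h₂ : ∀ f ∈ T₂, tl f ∈ B ∧ hd f ∈ B)
    (ha : a ∈ A) (hb : b ∈ B) (hends : (tl e = a ∧ hd e = b) ∨ (tl e = b ∧ hd e = a)) :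
    e ∉ T₁ ∪ T₂ := by
  have hA := Finset.disjoint_left.1 hAB
  intro he
  rcases Finset.mem_union.1 he with he | he <;> rcases hends with ⟨rfl, rfl⟩ | ⟨rfl, rfl⟩
  exacts [hA (h₁ e he).2 hb, hA (h₁ e he).1 hb, hA ha (h₂ e he).1, hA ha (h₂ e he).2]

lemma IsSpanningTreeOn.insert_union {T₁ T₂ : Finset E} (hAB : Disjoint A B)
    (h₁ : IsSpanningTreeOn tl hd A T₁) (h₂ : IsSpanningTreeOn tl hd B T₂) (ha : a ∈ A)
    (hb : b ∈ B) (hends : (tl e = a ∧ hd e = b) ∨ (tl e = b ∧ hd e = a)) :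
    IsSpanningTreeOn tl hd (A ∪ B) (insert e (T₁ ∪ T₂)) := by
  have hsub : ((T₁ ∪ T₂ : Finset E) : Set E) ⊆ ↑(insert e (T₁ ∪ T₂)) :=
    Finset.coe_subset.2 (Finset.subset_insert _ _)
  have hab : joinedRel tl hd ↑(insert e (T₁ ∪ T₂)) a b := by
    have := joinedRel_of_mem (tl := tl) (hd := hd)
      (Finset.mem_coe.2 (Finset.mem_insert_self e (T₁ ∪ T₂)))
    rcases hends with ⟨rfl, rfl⟩ | ⟨rfl, rfl⟩
    exacts [this, this.symm]
  have hjoin_a : ∀ p ∈ A ∪ B, joinedRel tl hd ↑(insert e (T₁ ∪ T₂)) p a := by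
    intro p hp
    rcases Finset.mem_union.1 hp with hp | hp
    · exact ((h₁.joined p hp a ha).mono (by simp)).mono hsub
    · exact (((h₂.joined p hp b hb).mono (by simp)).mono hsub).trans _ _ _ hab.symm
  refine ⟨fun f hf => ?_, fun p hp q hq => (hjoin_a p hp).trans _ _ _ (hjoin_a q hq).symm, ?_⟩
  · rcases Finset.mem_insert.1 hf with rfl | hf
    · rcases hends with ⟨h1, h2⟩ | ⟨h1, h2⟩ <;> simp [h1, h2, ha, hb]
    · rcases Finset.mem_union.1 hf with hf | hf
      · exact (h₁.mem f hf).imp (Finset.mem_union_left _) (Finset.mem_union_left _)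
      · exact (h₂.mem f hf).imp (Finset.mem_union_right _) (Finset.mem_union_right _)
  · have hT : Disjoint T₁ T₂ := Finset.disjoint_left.2 fun f hf₁ hf₂ =>
      Finset.disjoint_left.1 hAB (h₁.mem f hf₁).1 (h₂.mem f hf₂).1
    rw [Finset.card_insert_of_notMem (notMem_union_of_crossing hAB h₁.mem h₂.mem ha hb hends),
      Finset.card_union_of_disjoint hT, Finset.card_union_of_disjoint hAB,
      ← h₁.card_add_one, ← h₂.card_add_one]
    ring

end Glue

section GlueAdapted

variable {V E k : Type} [Fintype V] [Zero k] {tl hd : E → V} {A B : Finset V} {a b : V}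
  {e : E} {D₁ D₂ : Finset E}

lemma component_union_eq_right (hAB : Disjoint A B) (hD₁ : ∀ f ∈ D₁, tl f ∈ A ∧ hd f ∈ A)
    (hD₂ : ∀ f ∈ D₂, tl f ∈ B ∧ hd f ∈ B) (hB : ∀ p ∈ B, ∀ q ∈ B, joinedRel tl hd ↑D₂ p q)
    {v : V} (hv : v ∈ B) : component tl hd (D₁ ∪ D₂) v = B := by
  refine (component_subset (fun f hf => ?_) hv).antisymm fun q hq =>
    mem_component.2 ((hB v hv q hq).mono (by simp))
  rcases Finset.mem_union.1 hf with hf | hf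
  · exact iff_of_false (Finset.disjoint_left.1 hAB (hD₁ f hf).1)
      (Finset.disjoint_left.1 hAB (hD₁ f hf).2)
  · exact iff_of_true (hD₂ f hf).1 (hD₂ f hf).2

lemma component_insert_union (hAB : Disjoint A B) (hD₁ : ∀ f ∈ D₁, tl f ∈ A ∧ hd f ∈ A)
    (hD₂ : ∀ f ∈ D₂, tl f ∈ B ∧ hd f ∈ B) (hB : ∀ p ∈ B, ∀ q ∈ B, joinedRel tl hd ↑D₂ p q)
    (ha : a ∈ A) (hb : b ∈ B) (hends : (tl e = a ∧ hd e = b) ∨ (tl e = b ∧ hd e = a))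
    {v : V} (hv : v ∈ A) :
    component tl hd (insert e (D₁ ∪ D₂)) v =
      if a ∈ component tl hd D₁ v then component tl hd D₁ v ∪ B
      else component tl hd D₁ v := by
  set C := component tl hd D₁ v
  have hCA : C ⊆ A := component_subset_of_mem hD₁ hv
  have hnotB : ∀ u ∈ A, u ∉ B := fun u hu => Finset.disjoint_left.1 hAB hu
  have hmono : C ⊆ component tl hd (insert e (D₁ ∪ D₂)) v :=
    component_mono (by intro f; simp +contextual) v
  split_ifs with haC
  · refine (component_subset (fun f hf => ?_) (Finset.mem_union_left _
      (mem_component_self D₁ v))).antisymm (Finset.union_subset hmono fun q hq => ?_)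
    · rcases Finset.mem_insert.1 hf with rfl | hf
      · have hmem : a ∈ C ∪ B ∧ b ∈ C ∪ B :=
          ⟨Finset.mem_union_left _ haC, Finset.mem_union_right _ hb⟩
        rcases hends with ⟨h1, h2⟩ | ⟨h1, h2⟩ <;> rw [h1, h2]
        exacts [iff_of_true hmem.1 hmem.2, iff_of_true hmem.2 hmem.1]
      rcases Finset.mem_union.1 hf with hf | hf
      · simp only [Finset.mem_union, hnotB _ (hD₁ f hf).1, hnotB _ (hD₁ f hf).2, or_false]
        exact tl_mem_component_iff hf v
      · exact iff_of_true (Finset.mem_union_right _ (hD₂ f hf).1)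
          (Finset.mem_union_right _ (hD₂ f hf).2)
    · have hab : joinedRel tl hd ↑(insert e (D₁ ∪ D₂)) a b := by
        have := joinedRel_of_mem (tl := tl) (hd := hd)
          (Finset.mem_coe.2 (Finset.mem_insert_self e (D₁ ∪ D₂)))
        rcases hends with ⟨rfl, rfl⟩ | ⟨rfl, rfl⟩
        exacts [this, this.symm]
      exact mem_component.2 (((mem_component.1 (hmono haC)).trans _ _ _ hab).trans _ _ _
        ((hB b hb q hq).mono (by intro f; simp +contextual)))
  · refine (component_subset (fun f hf => ?_) (mem_component_self D₁ v)).antisymm hmono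
    rcases Finset.mem_insert.1 hf with rfl | hf
    · have hbC : b ∉ C := fun h => hnotB _ (hCA h) hb
      rcases hends with ⟨h1, h2⟩ | ⟨h1, h2⟩ <;> rw [h1, h2]
      exacts [iff_of_false haC hbC, iff_of_false hbC haC]
    rcases Finset.mem_union.1 hf with hf | hf
    · exact tl_mem_component_iff hf v
    · exact iff_of_false (fun h => hnotB _ (hCA h) (hD₂ f hf).1)
        (fun h => hnotB _ (hCA h) (hD₂ f hf).2)

lemma sum_component_insert_union {θ : V → ℝ} (hAB : Disjoint A B)
    (hθ : ∑ i ∈ A, θ i + ∑ i ∈ B, θ i = 0) (hD₁ : ∀ f ∈ D₁, tl f ∈ A ∧ hd f ∈ A)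
    (hD₂ : ∀ f ∈ D₂, tl f ∈ B ∧ hd f ∈ B) (hB : ∀ p ∈ B, ∀ q ∈ B, joinedRel tl hd ↑D₂ p q)
    (ha : a ∈ A) (hb : b ∈ B) (hends : (tl e = a ∧ hd e = b) ∨ (tl e = b ∧ hd e = a))
    {v : V} (hv : v ∈ A) :
    ∑ j ∈ component tl hd (insert e (D₁ ∪ D₂)) v, θ j =
      ∑ j ∈ component tl hd D₁ v, recenter θ A a j := by
  rw [component_insert_union hAB hD₁ hD₂ hB ha hb hends hv, sum_recenter]
  split_ifs
  · rw [Finset.sum_union (Finset.disjoint_of_subset_left (component_subset_of_mem hD₁ hv) hAB)]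
    linarith
  · ring

variable {T₁ T₂ : Finset E} {θ : V → ℝ}

lemma sum_component_erase_insert_union (hAB : Disjoint A B)
    (hθ : ∑ i ∈ A, θ i + ∑ i ∈ B, θ i = 0) (h₁ : ∀ f ∈ T₁, tl f ∈ A ∧ hd f ∈ A)
    (h₂ : IsSpanningTreeOn tl hd B T₂) (ha : a ∈ A) (hb : b ∈ B)
    (hends : (tl e = a ∧ hd e = b) ∨ (tl e = b ∧ hd e = a)) {f : E} (hf : f ∈ T₁) :
    ∑ j ∈ component tl hd ((insert e (T₁ ∪ T₂)).erase f) (hd f), θ j =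
      ∑ j ∈ component tl hd (T₁.erase f) (hd f), recenter θ A a j := by
  have hfe : e ≠ f := fun h => notMem_union_of_crossing hAB h₁ h₂.mem ha hb hends
    (Finset.mem_union_left _ (h ▸ hf))
  have hf₂ : f ∉ T₂ := fun hf₂ => Finset.disjoint_left.1 hAB (h₁ f hf).1 (h₂.mem f hf₂).1
  rw [Finset.erase_insert_of_ne hfe, Finset.erase_union_distrib, Finset.erase_eq_of_notMem hf₂]
  exact sum_component_insert_union hAB hθ (fun g hg => h₁ g (Finset.mem_of_mem_erase hg))
    h₂.mem h₂.joined ha hb hends (h₁ f hf).2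

theorem IsAdapted.insert_union {x xs : E → k} (hAB : Disjoint A B)
    (hθ : ∑ i ∈ A, θ i + ∑ i ∈ B, θ i = 0) (hA : ∑ i ∈ A, θ i < 0)
    (h₁ : IsSpanningTreeOn tl hd A T₁) (h₂ : IsSpanningTreeOn tl hd B T₂) (ha : a ∈ A)
    (hb : b ∈ B) (harrow : (tl e = a ∧ hd e = b ∧ x e ≠ 0) ∨ (tl e = b ∧ hd e = a ∧ xs e ≠ 0))
    (hT₁ : IsAdapted tl hd (recenter θ A a) x xs T₁)
    (hT₂ : IsAdapted tl hd (recenter θ B b) x xs T₂) :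
    IsAdapted tl hd θ x xs (insert e (T₁ ∪ T₂)) := by
  have hends : (tl e = a ∧ hd e = b) ∨ (tl e = b ∧ hd e = a) :=
    harrow.imp (fun h => ⟨h.1, h.2.1⟩) fun h => ⟨h.1, h.2.1⟩
  intro f hf
  rcases Finset.mem_insert.1 hf with rfl | hf
  · rw [Finset.erase_insert (notMem_union_of_crossing hAB h₁.mem h₂.mem ha hb hends)]
    rcases harrow with ⟨-, hhd, hx⟩ | ⟨-, hhd, hxs⟩
    · rw [hhd, component_union_eq_right hAB h₁.mem h₂.mem h₂.joined hb]
      exact ⟨fun _ => hx, fun h => absurd (by linarith) h⟩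
    · rw [hhd, Finset.union_comm, component_union_eq_right hAB.symm h₂.mem h₁.mem h₁.joined ha]
      exact ⟨fun h => absurd h (by linarith), fun _ => hxs⟩
  rcases Finset.mem_union.1 hf with hf | hf
  · rw [sum_component_erase_insert_union hAB hθ h₁.mem h₂ ha hb hends hf]
    exact hT₁ f hf
  · rw [Finset.union_comm, sum_component_erase_insert_union hAB.symm (by linarith) h₂.mem h₁ hb ha
      hends.symm hf]
    exact hT₂ f hf

end GlueAdapted

section Contraction

variable {V E k : Type} [Zero k] {tl hd : E → V} {θ : V → ℝ} {x xs : E → k}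
  {W J K : Finset V} {S : Finset E} {e : E} {a b : V}

lemma ClosedOn.mono {D D' : Set E} (h : D' ⊆ D) (hK : ClosedOn tl hd x xs D K) :
    ClosedOn tl hd x xs D' K := fun f hf => hK f (h hf)

lemma ClosedOn.of_erase (hK : ClosedOn tl hd x xs ↑(S.erase e) K)
    (he : (x e ≠ 0 → tl e ∈ K → hd e ∈ K) ∧ (xs e ≠ 0 → hd e ∈ K → tl e ∈ K)) :
    ClosedOn tl hd x xs ↑S K := fun f hf => by
  by_cases hfe : f = e
  · exact hfe ▸ he
  · exact hK f (Finset.mem_erase.2 ⟨hfe, hf⟩)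

lemma ClosedOn.of_erase_of_iff (hK : ClosedOn tl hd x xs ↑(S.erase e) K)
    (he : tl e ∈ K ↔ hd e ∈ K) : ClosedOn tl hd x xs ↑S K :=
  hK.of_erase ⟨fun _ h => he.1 h, fun _ h => he.2 h⟩

lemma ClosedOn.of_restrict (hJ : ClosedOn tl hd x xs ↑S J) (hKJ : K ⊆ J)
    (hK : ClosedOn tl hd x xs ↑(S.filter fun f => tl f ∈ J ∧ hd f ∈ J) K) :
    ClosedOn tl hd x xs ↑S K := fun f hf => by
  refine ⟨fun hx htl => ?_, fun hxs hhd => ?_⟩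
  · have hfJ : f ∈ S.filter fun f => tl f ∈ J ∧ hd f ∈ J :=
      Finset.mem_filter.2 ⟨hf, hKJ htl, (hJ f hf).1 hx (hKJ htl)⟩
    exact (hK f hfJ).1 hx htl
  · have hfJ : f ∈ S.filter fun f => tl f ∈ J ∧ hd f ∈ J :=
      Finset.mem_filter.2 ⟨hf, (hJ f hf).2 hxs (hKJ hhd), hKJ hhd⟩
    exact (hK f hfJ).2 hxs hhd

lemma ClosedOn.union_of_restrict_sdiff (hS : ∀ f ∈ S, tl f ∈ W ∧ hd f ∈ W)
    (hJ : ClosedOn tl hd x xs ↑S J)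
    (hK : ClosedOn tl hd x xs ↑(S.filter fun f => tl f ∈ W \ J ∧ hd f ∈ W \ J) K) :
    ClosedOn tl hd x xs ↑S (K ∪ J) := fun f hf => by
  obtain ⟨htlW, hhdW⟩ := hS f hf
  have hfilter : tl f ∉ J → hd f ∉ J → f ∈ S.filter fun f => tl f ∈ W \ J ∧ hd f ∈ W \ J :=
    fun htlJ hhdJ => Finset.mem_filter.2
      ⟨hf, Finset.mem_sdiff.2 ⟨htlW, htlJ⟩, Finset.mem_sdiff.2 ⟨hhdW, hhdJ⟩⟩
  refine ⟨fun hx htl => ?_, fun hxs hhd => ?_⟩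
  · by_cases htlJ : tl f ∈ J
    · exact Finset.mem_union_right _ ((hJ f hf).1 hx htlJ)
    by_cases hhdJ : hd f ∈ J
    · exact Finset.mem_union_right _ hhdJ
    · exact Finset.mem_union_left _
        ((hK f (hfilter htlJ hhdJ)).1 hx ((Finset.mem_union.1 htl).resolve_right htlJ))
  · by_cases hhdJ : hd f ∈ J
    · exact Finset.mem_union_right _ ((hJ f hf).2 hxs hhdJ)
    by_cases htlJ : tl f ∈ J
    · exact Finset.mem_union_right _ htlJ
    · exact Finset.mem_union_left _
        ((hK f (hfilter htlJ hhdJ)).2 hxs ((Finset.mem_union.1 hhd).resolve_right hhdJ))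

lemma stableSub_of_nonneg (hgen : GenericOn θ W)
    (h : ∀ K ⊆ W, ClosedOn tl hd x xs ↑S K → K.Nonempty → K ≠ W → 0 ≤ ∑ i ∈ K, θ i) :
    StableSub tl hd θ x xs W ↑S := fun K hKW hK hKne hKW' =>
  (h K hKW hK hKne hKW').lt_of_ne (hgen K hKW hKne hKW').symm

lemma DestabSub.sum_neg (hgen : GenericOn θ W) (hJ : DestabSub tl hd θ x xs W ↑S J) :
    ∑ i ∈ J, θ i < 0 :=
  hJ.2.2.2.2.lt_of_ne (hgen J hJ.1 hJ.2.1 hJ.2.2.1)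

lemma exists_min_destabSub (h : ¬ StableSub tl hd θ x xs W ↑S) :
    ∃ J, DestabSub tl hd θ x xs W ↑S J ∧
      ∀ K, DestabSub tl hd θ x xs W ↑S K → ∑ i ∈ J, θ i ≤ ∑ i ∈ K, θ i := by
  simp only [StableSub, not_forall, not_lt] at h
  obtain ⟨J₀, hJ₀W, hJ₀, hJ₀ne, hJ₀W', hJ₀θ⟩ := h
  obtain ⟨J, hJ, hmin⟩ := Finset.exists_min_image
    (W.powerset.filter (DestabSub tl hd θ x xs W ↑S)) (fun J => ∑ i ∈ J, θ i)
    ⟨J₀, Finset.mem_filter.2 ⟨Finset.mem_powerset.2 hJ₀W, hJ₀W, hJ₀ne, hJ₀W', hJ₀, hJ₀θ⟩⟩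
  exact ⟨J, (Finset.mem_filter.1 hJ).2, fun K hK =>
    hmin K (Finset.mem_filter.2 ⟨Finset.mem_powerset.2 hK.1, hK⟩)⟩

lemma DestabSub.exists_arrow (hS : ∀ f ∈ S, tl f ∈ W ∧ hd f ∈ W) (he : e ∈ S)
    (hstab : StableSub tl hd θ x xs W ↑S) (hJ : DestabSub tl hd θ x xs W ↑(S.erase e) J) :
    ∃ a ∈ J, ∃ b ∈ W \ J,
      (tl e = a ∧ hd e = b ∧ x e ≠ 0) ∨ (tl e = b ∧ hd e = a ∧ xs e ≠ 0) := by
  obtain ⟨hJW, hJne, hJW', hJ, hJθ⟩ := hJ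
  have hopen : ¬ ((x e ≠ 0 → tl e ∈ J → hd e ∈ J) ∧ (xs e ≠ 0 → hd e ∈ J → tl e ∈ J)) :=
    fun he => (hstab J hJW (hJ.of_erase he) hJne hJW').not_ge hJθ
  by_cases hx : x e ≠ 0 ∧ tl e ∈ J ∧ hd e ∉ J
  · exact ⟨_, hx.2.1, _, Finset.mem_sdiff.2 ⟨(hS e he).2, hx.2.2⟩, .inl ⟨rfl, rfl, hx.1⟩⟩
  · have hxs : xs e ≠ 0 ∧ hd e ∈ J ∧ tl e ∉ J := by tauto
    exact ⟨_, hxs.2.1, _, Finset.mem_sdiff.2 ⟨(hS e he).1, hxs.2.2⟩, .inr ⟨rfl, rfl, hxs.1⟩⟩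

lemma StableSub.nonempty (hstab : StableSub tl hd θ x xs W ↑S) (hW : 1 < W.card)
    (hθ : ∑ i ∈ W, θ i = 0) : S.Nonempty := by
  by_contra! hS
  have hclosed : ∀ K, ClosedOn tl hd x xs ↑S K := by simp [ClosedOn, hS]
  obtain ⟨v, hv⟩ := Finset.card_pos.1 (by omega : 0 < W.card)
  have h₁ := hstab {v} (Finset.singleton_subset_iff.2 hv) (hclosed _) (by simp)
    (fun h => by simp [← h] at hW)
  have h₂ := hstab (W.erase v) (Finset.erase_subset v W) (hclosed _)
    (Finset.card_pos.1 (by rw [Finset.card_erase_of_mem hv]; omega)) (Finset.erase_ne_self.2 hv)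
  rw [← Finset.add_sum_erase W θ hv] at hθ
  simp only [Finset.sum_singleton] at h₁
  linarith

lemma coe_filter_erase_subset (p : E → Prop) [DecidablePred p] :
    (↑((S.erase e).filter p) : Set E) ⊆ ↑(S.filter p) :=
  Finset.coe_subset.2 (Finset.filter_subset_filter _ (Finset.erase_subset _ _))

theorem stableSub_recenter_destab (hgen : GenericOn θ W)
    (hstab : StableSub tl hd θ x xs W ↑S) (hJ : DestabSub tl hd θ x xs W ↑(S.erase e) J)
    (hmin : ∀ K, DestabSub tl hd θ x xs W ↑(S.erase e) K → ∑ i ∈ J, θ i ≤ ∑ i ∈ K, θ i)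
    (hends : (tl e = a ∧ hd e = b) ∨ (tl e = b ∧ hd e = a)) (hb : b ∉ J) :
    StableSub tl hd (recenter θ J a) x xs J ↑(S.filter fun f => tl f ∈ J ∧ hd f ∈ J) := by
  have hJneg := hJ.sum_neg hgen
  obtain ⟨hJW, -, hJW', hJcl, -⟩ := hJ
  have hJss : J ⊂ W := Finset.ssubset_iff_subset_ne.2 ⟨hJW, hJW'⟩
  refine stableSub_of_nonneg (hgen.recenter hJss) fun K hKJ hK hKne _ => ?_
  have hKW : K ⊂ W := hKJ.trans_ssubset hJss
  have hKcl : ClosedOn tl hd x xs ↑(S.erase e) K :=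
    hJcl.of_restrict hKJ (hK.mono (coe_filter_erase_subset _))
  rw [sum_recenter]
  split_ifs with haK
  · by_cases hKpos : 0 < ∑ i ∈ K, θ i
    · linarith
    · linarith [hmin K ⟨hKW.subset, hKne, hKW.ne, hKcl, not_lt.1 hKpos⟩]
  · have hbK : b ∉ K := fun h => hb (hKJ h)
    have he : tl e ∈ K ↔ hd e ∈ K := by
      rcases hends with ⟨h1, h2⟩ | ⟨h1, h2⟩ <;> simp [h1, h2, haK, hbK]
    rw [sub_zero]
    exact (hstab K hKW.subset (hKcl.of_erase_of_iff he) hKne hKW.ne).le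

theorem stableSub_recenter_sdiff (hgen : GenericOn θ W) (hθ : ∑ i ∈ W, θ i = 0)
    (hS : ∀ f ∈ S, tl f ∈ W ∧ hd f ∈ W) (hstab : StableSub tl hd θ x xs W ↑S)
    (hJ : DestabSub tl hd θ x xs W ↑(S.erase e) J)
    (hmin : ∀ K, DestabSub tl hd θ x xs W ↑(S.erase e) K → ∑ i ∈ J, θ i ≤ ∑ i ∈ K, θ i)
    (hends : (tl e = a ∧ hd e = b) ∨ (tl e = b ∧ hd e = a)) (ha : a ∈ J) :
    StableSub tl hd (recenter θ (W \ J) b) x xs (W \ J)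
      ↑(S.filter fun f => tl f ∈ W \ J ∧ hd f ∈ W \ J) := by
  have hJneg := hJ.sum_neg hgen
  obtain ⟨hJW, -, -, hJcl, -⟩ := hJ
  have hsdiff : ∑ i ∈ W \ J, θ i = -∑ i ∈ J, θ i := by
    rw [Finset.sum_sdiff_eq_sub hJW, hθ, zero_sub]
  have hLss : W \ J ⊂ W := Finset.sdiff_ssubset hJW ⟨a, ha⟩
  refine stableSub_of_nonneg (hgen.recenter hLss) fun K hKL hK hKne hKL' => ?_
  have hKJcl : ClosedOn tl hd x xs ↑(S.erase e) (K ∪ J) :=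
    hJcl.union_of_restrict_sdiff (fun f hf => hS f (Finset.mem_of_mem_erase hf))
      (hK.mono (coe_filter_erase_subset _))
  have hKJW : K ∪ J ⊂ W := by
    refine Finset.ssubset_iff_subset_ne.2 ⟨Finset.union_subset (hKL.trans Finset.sdiff_subset)
      hJW, fun h => hKL' (hKL.antisymm fun v hv => ?_)⟩
    obtain ⟨hvW, hvJ⟩ := Finset.mem_sdiff.1 hv
    exact (Finset.mem_union.1 (h ▸ hvW)).resolve_right hvJ
  have hKJne : (K ∪ J).Nonempty := hKne.mono Finset.subset_union_left
  have hsum : ∑ i ∈ K ∪ J, θ i = ∑ i ∈ K, θ i + ∑ i ∈ J, θ i :=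
    Finset.sum_union (Finset.disjoint_of_subset_left hKL Finset.sdiff_disjoint)
  rw [sum_recenter]
  split_ifs with hbK
  · have he : tl e ∈ K ∪ J ↔ hd e ∈ K ∪ J := by
      rcases hends with ⟨h1, h2⟩ | ⟨h1, h2⟩ <;> simp [h1, h2, ha, hbK]
    linarith [hstab (K ∪ J) hKJW.subset (hKJcl.of_erase_of_iff he) hKJne hKJW.ne]
  · by_cases hpos : 0 < ∑ i ∈ K ∪ J, θ i
    · linarith
    · linarith [hmin (K ∪ J) ⟨hKJW.subset, hKJne, hKJW.ne, hKJcl, not_lt.1 hpos⟩]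

end Contraction

theorem exists_isAdapted_isSpanningTreeOn {V E k : Type} [Fintype V] [Zero k] {tl hd : E → V}
    {x xs : E → k} (W : Finset V) (S : Finset E) (θ : V → ℝ) (hW : W.Nonempty)
    (hθ : ∑ i ∈ W, θ i = 0) (hgen : GenericOn θ W) (hS : ∀ f ∈ S, tl f ∈ W ∧ hd f ∈ W)
    (hstab : StableSub tl hd θ x xs W ↑S) :
    ∃ T, IsSpanningTreeOn tl hd W T ∧ IsAdapted tl hd θ x xs T := by
  by_cases hW1 : W.card = 1
  · exact ⟨∅, .of_card_eq_one hW1, by simp [IsAdapted]⟩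
  obtain ⟨e, he⟩ := hstab.nonempty (by have := hW.card_pos; omega) hθ
  have hSe : (S.erase e).card < S.card := Finset.card_erase_lt_of_mem he
  by_cases hdel : StableSub tl hd θ x xs W ↑(S.erase e)
  · exact exists_isAdapted_isSpanningTreeOn W (S.erase e) θ hW hθ hgen
      (fun f hf => hS f (Finset.mem_of_mem_erase hf)) hdel
  obtain ⟨J, hJ, hmin⟩ := exists_min_destabSub hdel
  obtain ⟨a, ha, b, hb, harrow⟩ := hJ.exists_arrow hS he hstab
  have hends : (tl e = a ∧ hd e = b) ∨ (tl e = b ∧ hd e = a) :=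
    harrow.imp (fun h => ⟨h.1, h.2.1⟩) fun h => ⟨h.1, h.2.1⟩
  have hJW : J ⊂ W := Finset.ssubset_iff_subset_ne.2 ⟨hJ.1, hJ.2.2.1⟩
  have hLW : W \ J ⊂ W := Finset.sdiff_ssubset hJ.1 ⟨a, ha⟩
  have hJcard := Finset.card_lt_card hJW
  have hLcard := Finset.card_lt_card hLW
  have hS₁ := Finset.card_filter_le S fun f => tl f ∈ J ∧ hd f ∈ J
  have hS₂ := Finset.card_filter_le S fun f => tl f ∈ W \ J ∧ hd f ∈ W \ J
  obtain ⟨T₁, hT₁, hadapt₁⟩ := exists_isAdapted_isSpanningTreeOn J _ (recenter θ J a) ⟨a, ha⟩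
    (sum_recenter_self ha) (hgen.recenter hJW) (fun f hf => (Finset.mem_filter.1 hf).2)
    (stableSub_recenter_destab hgen hstab hJ hmin hends (Finset.mem_sdiff.1 hb).2)
  obtain ⟨T₂, hT₂, hadapt₂⟩ := exists_isAdapted_isSpanningTreeOn (W \ J) _
    (recenter θ (W \ J) b) ⟨b, hb⟩ (sum_recenter_self hb) (hgen.recenter hLW)
    (fun f hf => (Finset.mem_filter.1 hf).2)
    (stableSub_recenter_sdiff hgen hθ hS hstab hJ hmin hends ha)
  have hsplit : J ∪ W \ J = W := Finset.union_sdiff_of_subset hJ.1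
  have hθsplit : ∑ i ∈ J, θ i + ∑ i ∈ W \ J, θ i = 0 := by
    rw [← Finset.sum_union Finset.disjoint_sdiff, hsplit, hθ]
  exact ⟨insert e (T₁ ∪ T₂), hsplit ▸ hT₁.insert_union Finset.disjoint_sdiff hT₂ ha hb hends,
    hadapt₁.insert_union Finset.disjoint_sdiff hθsplit (hJ.sum_neg hgen) hT₁ hT₂ ha hb harrow
      hadapt₂⟩
termination_by W.card + S.card
decreasing_by all_goals omega

theorem statement10_general {V E : Type} [Fintype V] [Nonempty V] [Fintype E]
    (tl hd : E → V)
    (k : Type) [Field k]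
    (θ : V → ℝ) (hgen : Generic θ) (hθ : ∑ i, θ i = 0)
    (x xs : E → k) :
    StableSub tl hd θ x xs Finset.univ Set.univ ↔
      ∃ T : Finset E, IsSpanningTree tl hd T ∧
        ∀ e ∈ T,
          ((0 < ∑ j ∈ component tl hd (T.erase e) (hd e), θ j) → x e ≠ 0) ∧
          (¬ (0 < ∑ j ∈ component tl hd (T.erase e) (hd e), θ j) → xs e ≠ 0) := by
  refine ⟨fun hstab => ?_, fun ⟨T, hT, hadapt⟩ => stableSub_of_isAdapted hgen hθ hT hadapt⟩
  obtain ⟨T, hT, hadapt⟩ := exists_isAdapted_isSpanningTreeOn (Finset.univ : Finset V)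
    (Finset.univ : Finset E) θ Finset.univ_nonempty hθ (fun K _ => hgen K) (by simp)
    (by rwa [Finset.coe_univ])
  exact ⟨T, hT.isSpanningTree, hadapt⟩

/-- `(x, xs)` is `θ`-stable iff there is a spanning tree `T` such that
`x e ≠ 0` for every `θ`-forward edge `e ∈ T` and `xs e ≠ 0` for every `θ`-backward
edge `e ∈ T`. -/
theorem statement10 {V E : Type} [Fintype V] [Nonempty V] [Fintype E]
    (tl hd : E → V) (hQ : IsConn tl hd Set.univ)
    (k : Type) [Field k]
    (θ : V → ℝ) (hgen : Generic θ) (hθ : ∑ i, θ i = 0)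
    (x xs : E → k) :
    StableSub tl hd θ x xs Finset.univ Set.univ ↔
      ∃ T : Finset E, IsSpanningTree tl hd T ∧
        ∀ e ∈ T,
          ((0 < ∑ j ∈ component tl hd (T.erase e) (hd e), θ j) → x e ≠ 0) ∧
          (¬ (0 < ∑ j ∈ component tl hd (T.erase e) (hd e), θ j) → xs e ≠ 0) :=
  statement10_general tl hd k θ hgen hθ x xs

end
end

section
/- Let Q be a connected quiver, k a field, θ : V → ℝ generic with Σ_{i∈V} θ_i = 0, and (x, x*) a θ-stable toric representation of the double quiver of Q. Let e ∈ E, suppose the restriction of (x, x*) to E ∖ {e} is not θ-stable, and suppose every destabilising subset contains t(e) (and hence not h(e)). Let β := min{Σ_{i∈J} θ_i : J destabilising} (so β < 0) and define θ' : V → ℝ by θ'_{t(e)} = θ_{t(e)} − β, θ'_{h(e)} = θ_{h(e)} + β, and θ'_i = θ_i otherwise. Then the restriction of (x, x*) to E ∖ {e} is θ'-semistable but not θ'-stable: every subset J with ∅ ≠ J ⊊ V closed for the restriction satisfies Σ_{i∈J} θ'_i ≥ 0, and equality holds for at least one such J. -/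
/-!
Let `J₁` be a destabilising set attaining `β`; it contains `t(e)` but not `h(e)`, and
`θ'(J₁) = θ(J₁) - β = 0`. Let `J` be closed for the restriction. If `J` contains both or neither
endpoint of `e`, it is closed for the whole representation and `θ'(J) = θ(J) > 0`. If
`t(e) ∈ J ∌ h(e)`, then `θ'(J) = θ(J) - β ≥ 0` by minimality of `β` (or since `θ(J) > 0`).
If `h(e) ∈ J ∌ t(e)`, then `J ∪ J₁` and `J ∩ J₁` are closed for all edges, so
`θ'(J) = θ(J) + θ(J₁) = θ(J ∪ J₁) + θ(J ∩ J₁) ≥ 0` by stability.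
-/

open Classical Finset

noncomputable section

namespace ClosedOn

variable {V E k : Type} [Zero k] {tl hd : E → V} {x xs : E → k} {S : Set E} {J K : Finset V}

lemma inter (hJ : ClosedOn tl hd x xs S J) (hK : ClosedOn tl hd x xs S K) :
    ClosedOn tl hd x xs S (J ∩ K) := by
  intro f hf
  simp only [Finset.mem_inter]
  exact ⟨fun hx h => ⟨(hJ f hf).1 hx h.1, (hK f hf).1 hx h.2⟩,
    fun hx h => ⟨(hJ f hf).2 hx h.1, (hK f hf).2 hx h.2⟩⟩

lemma union (hJ : ClosedOn tl hd x xs S J) (hK : ClosedOn tl hd x xs S K) :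
    ClosedOn tl hd x xs S (J ∪ K) := by
  intro f hf
  simp only [Finset.mem_union]
  exact ⟨fun hx h => h.imp ((hJ f hf).1 hx) ((hK f hf).1 hx),
    fun hx h => h.imp ((hJ f hf).2 hx) ((hK f hf).2 hx)⟩

lemma univ_of_mem_iff {e : E} (hJ : ClosedOn tl hd x xs {f | f ≠ e} J)
    (he : tl e ∈ J ↔ hd e ∈ J) : ClosedOn tl hd x xs Set.univ J := by
  intro f _
  by_cases hfe : f = e
  · subst hfe
    exact ⟨fun _ => he.1, fun _ => he.2⟩
  · exact hJ f hfe

end ClosedOn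

lemma exists_destabSub_of_not_stableSub {V E k : Type} [Zero k] {tl hd : E → V}
    {x xs : E → k} {θ : V → ℝ} {W : Finset V} {S : Set E}
    (h : ¬ StableSub tl hd θ x xs W S) : ∃ J, DestabSub tl hd θ x xs W S J := by
  simp only [StableSub, not_forall, not_lt] at h
  obtain ⟨J, hJW, hcl, hne, hnW, hle⟩ := h
  exact ⟨J, hJW, hne, hnW, hcl, hle⟩

section Stability

variable {V E k : Type} [Fintype V] [Zero k] {tl hd : E → V} {x xs : E → k} {θ : V → ℝ}

lemma StableSub.sum_nonneg (hstab : StableSub tl hd θ x xs Finset.univ Set.univ)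
    (hθ : ∑ i, θ i = 0) {J : Finset V} (hJ : ClosedOn tl hd x xs Set.univ J) :
    0 ≤ ∑ i ∈ J, θ i := by
  rcases J.eq_empty_or_nonempty with rfl | hne
  · simp
  by_cases huniv : J = Finset.univ
  · rw [huniv, hθ]
  · exact (hstab J (Finset.subset_univ J) hJ hne huniv).le

lemma hd_notMem_of_destabSub (hstab : StableSub tl hd θ x xs Finset.univ Set.univ) {e : E}
    {J : Finset V} (hJ : DestabSub tl hd θ x xs Finset.univ {f | f ≠ e} J) (htl : tl e ∈ J) :
    hd e ∉ J := by
  obtain ⟨hJW, hne, hnW, hcl, hle⟩ := hJ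
  intro hhd
  exact (hstab J hJW (hcl.univ_of_mem_iff (iff_of_true htl hhd)) hne hnW).not_ge hle

/-- `J ∪ J₁` and `J ∩ J₁` are closed for all edges, since `e` goes from `J₁ ∖ J` to `J ∖ J₁`. -/
lemma sum_add_sum_nonneg_of_crossing
    (hstab : StableSub tl hd θ x xs Finset.univ Set.univ) (hθ : ∑ i, θ i = 0) {e : E}
    {J J₁ : Finset V} (hJ : ClosedOn tl hd x xs {f | f ≠ e} J)
    (hJ₁ : ClosedOn tl hd x xs {f | f ≠ e} J₁)
    (htlJ : tl e ∉ J) (hhdJ : hd e ∈ J) (htlJ₁ : tl e ∈ J₁) (hhdJ₁ : hd e ∉ J₁) :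
    0 ≤ ∑ i ∈ J, θ i + ∑ i ∈ J₁, θ i := by
  have hunion := hstab.sum_nonneg hθ ((hJ.union hJ₁).univ_of_mem_iff
    (iff_of_true (Finset.mem_union_right _ htlJ₁) (Finset.mem_union_left _ hhdJ)))
  have hinter := hstab.sum_nonneg hθ ((hJ.inter hJ₁).univ_of_mem_iff
    (iff_of_false (fun h => htlJ (Finset.mem_inter.1 h).1)
      (fun h => hhdJ₁ (Finset.mem_inter.1 h).2)))
  rw [← Finset.sum_union_inter]
  exact add_nonneg hunion hinter

end Stability

lemma sum_shift_eq {V : Type} {a b : V} (hab : a ≠ b) (θ : V → ℝ) (β : ℝ) (J : Finset V) :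
    ∑ i ∈ J, (if i = a then θ i - β else if i = b then θ i + β else θ i) =
      ∑ i ∈ J, θ i - (if a ∈ J then β else 0) + (if b ∈ J then β else 0) := by
  have hpoint : ∀ i, (if i = a then θ i - β else if i = b then θ i + β else θ i) =
      θ i - (if i = a then β else 0) + (if i = b then β else 0) := by
    intro i
    rcases eq_or_ne i a with rfl | hia
    · simp [hab]
    · rcases eq_or_ne i b with rfl | hib
      · simp [hab.symm]
      · simp [hia, hib]
  simp only [hpoint, Finset.sum_add_distrib, Finset.sum_sub_distrib, Finset.sum_ite_eq']

theorem statement12_general {V E : Type} [Fintype V]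
    (tl hd : E → V)
    (k : Type) [Field k]
    (θ : V → ℝ) (hgen : Generic θ) (hθ : ∑ i, θ i = 0)
    (x xs : E → k)
    (hstab : StableSub tl hd θ x xs Finset.univ Set.univ)
    (e : E)
    (hunst : ¬ StableSub tl hd θ x xs Finset.univ {f | f ≠ e})
    (htl : ∀ J, DestabSub tl hd θ x xs Finset.univ {f | f ≠ e} J → tl e ∈ J)
    (β : ℝ)
    (hβ : β = sInf {s : ℝ | ∃ J, DestabSub tl hd θ x xs Finset.univ {f | f ≠ e} J ∧
      ∑ i ∈ J, θ i = s}) :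
    β < 0 ∧
    (∀ J : Finset V, ClosedOn tl hd x xs {f | f ≠ e} J → J.Nonempty →
      J ≠ Finset.univ →
      0 ≤ ∑ i ∈ J, (if i = tl e then θ i - β else if i = hd e then θ i + β else θ i)) ∧
    (∃ J : Finset V, ClosedOn tl hd x xs {f | f ≠ e} J ∧ J.Nonempty ∧
      J ≠ Finset.univ ∧
      ∑ i ∈ J, (if i = tl e then θ i - β else if i = hd e then θ i + β else θ i) = 0) := by
  obtain ⟨J₀, hJ₀⟩ := exists_destabSub_of_not_stableSub hunst
  have hfin : {s : ℝ | ∃ J, DestabSub tl hd θ x xs Finset.univ {f | f ≠ e} J ∧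
      ∑ i ∈ J, θ i = s}.Finite :=
    (Set.finite_range fun J : Finset V => ∑ i ∈ J, θ i).subset fun _ ⟨J, _, hJ⟩ => ⟨J, hJ⟩
  obtain ⟨⟨J₁, hJ₁, hJ₁β⟩, hmin⟩ := hβ ▸ hfin.isCompact.isLeast_sInf ⟨_, J₀, hJ₀, rfl⟩
  have htl₁ := htl J₁ hJ₁
  have hhd₁ := hd_notMem_of_destabSub hstab hJ₁ htl₁
  have hshift := sum_shift_eq (fun h : tl e = hd e => hhd₁ (h ▸ htl₁)) θ β
  obtain ⟨-, hJ₁ne, hJ₁nW, hJ₁cl, hJ₁le⟩ := hJ₁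
  have hβneg : β < 0 := hJ₁β ▸ lt_of_le_of_ne hJ₁le (hgen J₁ hJ₁ne hJ₁nW)
  refine ⟨hβneg, ?_, ⟨J₁, hJ₁cl, hJ₁ne, hJ₁nW, by simp [hshift, htl₁, hhd₁, hJ₁β]⟩⟩
  intro J hJ hne hnW
  rw [hshift]
  by_cases htlJ : tl e ∈ J <;> by_cases hhdJ : hd e ∈ J
  · simpa [htlJ, hhdJ] using hstab.sum_nonneg hθ (hJ.univ_of_mem_iff (iff_of_true htlJ hhdJ))
  · have hβJ : β ≤ ∑ i ∈ J, θ i := by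
      rcases le_or_gt (∑ i ∈ J, θ i) 0 with hle | hpos
      · exact hmin ⟨J, ⟨Finset.subset_univ J, hne, hnW, hJ, hle⟩, rfl⟩
      · linarith
    simpa [htlJ, hhdJ] using hβJ
  · have := sum_add_sum_nonneg_of_crossing hstab hθ hJ hJ₁cl htlJ hhdJ htl₁ hhd₁
    simpa [htlJ, hhdJ, hJ₁β] using this
  · simpa [htlJ, hhdJ] using
      hstab.sum_nonneg hθ (hJ.univ_of_mem_iff (iff_of_false htlJ hhdJ))

/-- with `β` the minimum of `Σ_J θ` over destabilising subsets `J` (so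
`β < 0`) and `θ'` obtained from `θ` by subtracting `β` at `t(e)` and adding `β` at
`h(e)`, the restriction of `(x, xs)` to `E ∖ {e}` is strictly `θ'`-semistable. -/
theorem statement12 {V E : Type} [Fintype V] [Nonempty V] [Fintype E]
    (tl hd : E → V) (hQ : IsConn tl hd Set.univ)
    (k : Type) [Field k]
    (θ : V → ℝ) (hgen : Generic θ) (hθ : ∑ i, θ i = 0)
    (x xs : E → k)
    (hstab : StableSub tl hd θ x xs Finset.univ Set.univ)
    (e : E)
    (hunst : ¬ StableSub tl hd θ x xs Finset.univ {f | f ≠ e})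
    (htl : ∀ J, DestabSub tl hd θ x xs Finset.univ {f | f ≠ e} J → tl e ∈ J)
    (β : ℝ)
    (hβ : β = sInf {s : ℝ | ∃ J, DestabSub tl hd θ x xs Finset.univ {f | f ≠ e} J ∧
      ∑ i ∈ J, θ i = s}) :
    β < 0 ∧
    (∀ J : Finset V, ClosedOn tl hd x xs {f | f ≠ e} J → J.Nonempty →
      J ≠ Finset.univ →
      0 ≤ ∑ i ∈ J, (if i = tl e then θ i - β else if i = hd e then θ i + β else θ i)) ∧
    (∃ J : Finset V, ClosedOn tl hd x xs {f | f ≠ e} J ∧ J.Nonempty ∧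
      J ≠ Finset.univ ∧
      ∑ i ∈ J, (if i = tl e then θ i - β else if i = hd e then θ i + β else θ i) = 0) :=
  statement12_general tl hd k θ hgen hθ x xs hstab e hunst htl β hβ

end
end
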